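/- Conversely, if w ∈ ℝ^n satisfies w_i² + w_i g_i^T w ≤ w_i b'_i for all i, then setting z = b' − G w there exists θ' ∈ [0,1]^n with w = diag(θ') z and z + G w = b'. -/
import Mathlib


open Matrix

theorem stmt_15 {n : ℕ} (G : Matrix (Fin n) (Fin n) ℝ) (b' : Fin n → ℝ)
    (w : Fin n → ℝ) (hw : ∀ i, (w i) ^ 2 + w i * (G i ⬝ᵥ w) ≤ w i * b' i)
    (z : Fin n → ℝ) (hz : z = b' - G.mulVec w) :
    ∃ θ' : Fin n → ℝ, (∀ i, 0 ≤ θ' i ∧ θ' i ≤ 1) ∧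
      (w = fun i => θ' i * z i) ∧ z + G.mulVec w = b' := by
  have hzi : ∀ i, z i = b' i - G i ⬝ᵥ w := by
    intro i; rw [hz]; simp [Matrix.mulVec]
  have key : ∀ i, w i ^ 2 ≤ w i * z i := by
    intro i
    have := hw i
    rw [hzi i]; nlinarith
  refine ⟨fun i => if z i = 0 then 0 else w i / z i, ?_, ?_, ?_⟩
  · intro i
    by_cases h : z i = 0
    · simp [h]
    · simp only [h, if_false]
      have hk := key i
      rcases lt_trichotomy (w i) 0 with hlt | heq | hgt
      · have hzle : z i ≤ w i := by nlinarith
        have hzneg : z i < 0 := lt_of_le_of_lt hzle hlt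
        constructor
        · exact le_of_lt (div_pos_of_neg_of_neg hlt hzneg)
        · rw [div_le_one_of_neg hzneg]; linarith
      · simp [heq]
      · have hzge : w i ≤ z i := by nlinarith
        have hzpos : 0 < z i := lt_of_lt_of_le hgt hzge
        constructor
        · positivity
        · rw [div_le_one hzpos]; exact hzge
  · funext i
    by_cases h : z i = 0
    · have hk := key i
      rw [h] at hk
      simp only [h, if_true, zero_mul]
      nlinarith
    · simp [h, div_mul_cancel₀]
  · rw [hz]; ring
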